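/- Define Γ₂(τ) = −∫₀^∞ ρ³ w'(ρ)³ [K(ζ) − ζ² K''(ζ)]_{ζ = τ(1+ρ²)} dρ, where K(ζ) = 2(1−e^{−ζ/4})/ζ and w(ρ) = π − 2 arctan ρ. Then there is a constant C > 0 with |Γ₂(τ)| ≤ C/τ for all τ > 1. -/

import Mathlib

noncomputable def w (ρ : ℝ) : ℝ := Real.pi - 2 * Real.arctan ρ

noncomputable def K (ζ : ℝ) : ℝ := 2 * (1 - Real.exp (-ζ / 4)) / ζ

noncomputable def Γ₂ (τ : ℝ) : ℝ :=
  -∫ ρ in Set.Ioi (0 : ℝ),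
      ρ ^ 3 * (deriv w ρ) ^ 3 *
        (K (τ * (1 + ρ ^ 2)) -
          (τ * (1 + ρ ^ 2)) ^ 2 * deriv (deriv K) (τ * (1 + ρ ^ 2)))

noncomputable def K1 (ζ : ℝ) : ℝ :=
  Real.exp (-ζ / 4) / 2 * ζ⁻¹ - 2 * (1 - Real.exp (-ζ / 4)) * (ζ ^ 2)⁻¹

noncomputable def K2 (ζ : ℝ) : ℝ :=
  -(Real.exp (-ζ / 4) / 8) * ζ⁻¹ - Real.exp (-ζ / 4) * (ζ ^ 2)⁻¹
    + 4 * (1 - Real.exp (-ζ / 4)) * (ζ ^ 3)⁻¹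

lemma hasDerivAt_w (ρ : ℝ) : HasDerivAt w (-(2 * (1 / (1 + ρ ^ 2)))) ρ := by
  exact (((Real.hasDerivAt_arctan ρ).const_mul 2).const_sub Real.pi).congr_deriv (by simp)

lemma hasDerivAt_exp_neg (ζ : ℝ) :
    HasDerivAt (fun x : ℝ => Real.exp (-x / 4)) (-(Real.exp (-ζ / 4)) / 4) ζ := by
  have h : HasDerivAt (fun x : ℝ => -x / 4) (-1 / 4) ζ := by
    simpa using ((hasDerivAt_id ζ).neg.div_const 4)
  simpa [div_eq_mul_inv, mul_comm, Function.comp_def] using (Real.hasDerivAt_exp (-ζ / 4)).comp ζ h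

lemma hasDerivAt_K {ζ : ℝ} (hζ : ζ ≠ 0) : HasDerivAt K (K1 ζ) ζ := by
  have h1 : HasDerivAt (fun x : ℝ => 2 * (1 - Real.exp (-x / 4)))
      (2 * (Real.exp (-ζ / 4) / 4)) ζ := by
    have := ((hasDerivAt_exp_neg ζ).const_sub 1).const_mul 2
    exact this.congr_deriv (by ring)
  have h2 : HasDerivAt (fun x : ℝ => x⁻¹) (-(ζ ^ 2)⁻¹) ζ := by
    simpa using hasDerivAt_inv hζ
  have := h1.mul h2
  exact this.congr_deriv (by unfold K1; ring)

lemma hasDerivAt_K1 {ζ : ℝ} (hζ : ζ ≠ 0) : HasDerivAt K1 (K2 ζ) ζ := by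
  have hinv : HasDerivAt (fun x : ℝ => x⁻¹) (-(ζ ^ 2)⁻¹) ζ := by
    simpa using hasDerivAt_inv hζ
  have hinv2 : HasDerivAt (fun x : ℝ => (x ^ 2)⁻¹) (-(2 * ζ) / (ζ ^ 2) ^ 2) ζ := by
    have hp : HasDerivAt (fun x : ℝ => x ^ 2) (2 * ζ) ζ := by
      simpa using hasDerivAt_pow 2 ζ
    exact hp.inv (pow_ne_zero 2 hζ)
  have hA : HasDerivAt (fun x : ℝ => Real.exp (-x / 4) / 2 * x⁻¹)
      ((-(Real.exp (-ζ / 4)) / 4 / 2) * ζ⁻¹ + Real.exp (-ζ / 4) / 2 * (-(ζ ^ 2)⁻¹)) ζ :=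
    ((hasDerivAt_exp_neg ζ).div_const 2).mul hinv
  have hB : HasDerivAt (fun x : ℝ => 2 * (1 - Real.exp (-x / 4)) * (x ^ 2)⁻¹)
      ((2 * (Real.exp (-ζ / 4) / 4)) * (ζ ^ 2)⁻¹
        + 2 * (1 - Real.exp (-ζ / 4)) * (-(2 * ζ) / (ζ ^ 2) ^ 2)) ζ := by
    have h1 : HasDerivAt (fun x : ℝ => 2 * (1 - Real.exp (-x / 4)))
        (2 * (Real.exp (-ζ / 4) / 4)) ζ := by
      have := ((hasDerivAt_exp_neg ζ).const_sub 1).const_mul 2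
      exact this.congr_deriv (by ring)
    exact h1.mul hinv2
  have := hA.sub hB
  exact this.congr_deriv (by unfold K2; field_simp; ring)

lemma deriv2_K_eq {ζ : ℝ} (hζ : 0 < ζ) : deriv (deriv K) ζ = K2 ζ := by
  have heq : deriv K =ᶠ[nhds ζ] K1 := by
    filter_upwards [eventually_ne_nhds hζ.ne'] with x hx
    exact (hasDerivAt_K hx).deriv
  rw [Filter.EventuallyEq.deriv_eq heq]
  exact (hasDerivAt_K1 hζ.ne').deriv

lemma exp_bound {ζ : ℝ} (hζ : 0 < ζ) : Real.exp (-ζ / 4) ≤ 64 / ζ ^ 2 := by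
  have h8 : ζ / 8 + 1 ≤ Real.exp (ζ / 8) := Real.add_one_le_exp (ζ / 8)
  have hpos : (0 : ℝ) < Real.exp (ζ / 8) := Real.exp_pos _
  have hsq : ζ ^ 2 / 64 ≤ Real.exp (ζ / 4) := by
    have : Real.exp (ζ / 4) = Real.exp (ζ / 8) * Real.exp (ζ / 8) := by
      rw [← Real.exp_add]; ring_nf
    rw [this]
    nlinarith [hζ.le]
  have h : Real.exp (-ζ / 4) = (Real.exp (ζ / 4))⁻¹ := by
    rw [← Real.exp_neg]; ring_nf
  rw [h, inv_le_comm₀ (Real.exp_pos _) (by positivity)]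
  have h64 : (64 / ζ ^ 2 : ℝ)⁻¹ = ζ ^ 2 / 64 := by field_simp
  rw [h64]
  exact hsq

lemma bracket_bound {ζ : ℝ} (hζ : 1 < ζ) : |K ζ - ζ ^ 2 * K2 ζ| ≤ 78 / ζ := by
  have hζ0 : 0 < ζ := lt_trans one_pos hζ
  have he1 : Real.exp (-ζ / 4) ≤ 1 := Real.exp_le_one_iff.mpr (by linarith)
  have he0 : 0 < Real.exp (-ζ / 4) := Real.exp_pos _
  have he2 : Real.exp (-ζ / 4) ≤ 64 / ζ ^ 2 := exp_bound hζ0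
  have hval : K ζ - ζ ^ 2 * K2 ζ
      = Real.exp (-ζ / 4) * ζ / 8 + Real.exp (-ζ / 4)
        - 2 * (1 - Real.exp (-ζ / 4)) / ζ := by
    unfold K K2
    field_simp
    ring
  have he2' : Real.exp (-ζ / 4) * ζ ^ 2 ≤ 64 := by
    rw [← le_div_iff₀ (by positivity)]; exact he2
  rw [hval, abs_le]
  constructor
  · have hA : 2 * (1 - Real.exp (-ζ / 4)) / ζ ≤ 78 / ζ := by
      gcongr
      nlinarith
    have hB : (0:ℝ) ≤ Real.exp (-ζ / 4) * ζ / 8 + Real.exp (-ζ / 4) := by positivity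
    linarith
  · rw [sub_le_iff_le_add]
    have h1 : Real.exp (-ζ / 4) * ζ / 8 ≤ 8 / ζ := by
      rw [div_le_div_iff₀ (by norm_num) hζ0]
      nlinarith [he2', sq ζ]
    have h2 : Real.exp (-ζ / 4) ≤ 64 / ζ := by
      calc Real.exp (-ζ / 4) ≤ 64 / ζ ^ 2 := he2
        _ ≤ 64 / ζ := by
          rw [div_le_div_iff₀ (by positivity) hζ0]
          nlinarith
    have h3 : (0:ℝ) ≤ 2 * (1 - Real.exp (-ζ / 4)) / ζ := by
      apply div_nonneg _ hζ0.le
      nlinarith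
    have : (78:ℝ) / ζ = 8 / ζ + 64 / ζ + 6 / ζ := by ring
    rw [this]
    have h6 : (0:ℝ) ≤ 6 / ζ := by positivity
    linarith

lemma K_bound {ζ : ℝ} (hζ : 0 < ζ) : |K ζ| ≤ 2 / ζ := by
  have he1 : Real.exp (-ζ / 4) ≤ 1 := Real.exp_le_one_iff.mpr (by linarith)
  have he0 : 0 < Real.exp (-ζ / 4) := Real.exp_pos _
  unfold K
  rw [abs_div, abs_of_pos hζ, div_le_div_iff₀ (by positivity) hζ]
  rw [abs_of_nonneg (by nlinarith : (0:ℝ) ≤ 2 * (1 - Real.exp (-ζ / 4)))]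
  nlinarith

theorem stmt_19 : ∃ C : ℝ, 0 < C ∧ ∀ τ : ℝ, 1 < τ → |Γ₂ τ| ≤ C / τ := by
  refine ⟨624 * Real.pi, by positivity, fun τ hτ => ?_⟩
  have hτ0 : 0 < τ := lt_trans one_pos hτ
  have hg : MeasureTheory.Integrable
      (fun ρ : ℝ => 624 / τ * (1 + ρ ^ 2)⁻¹)
      (MeasureTheory.volume.restrict (Set.Ioi 0)) :=
    (integrable_inv_one_add_sq.const_mul (624 / τ)).restrict
  rw [Γ₂, abs_neg, ← Real.norm_eq_abs]
  have hle : ‖∫ ρ in Set.Ioi (0:ℝ),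
      ρ ^ 3 * (deriv w ρ) ^ 3 *
        (K (τ * (1 + ρ ^ 2)) -
          (τ * (1 + ρ ^ 2)) ^ 2 * deriv (deriv K) (τ * (1 + ρ ^ 2)))‖
      ≤ ∫ ρ in Set.Ioi (0:ℝ), 624 / τ * (1 + ρ ^ 2)⁻¹ := by
    apply MeasureTheory.norm_integral_le_of_norm_le hg
    filter_upwards [MeasureTheory.ae_restrict_mem measurableSet_Ioi] with ρ hρ
    have hρ0 : (0:ℝ) < ρ := hρ
    set ζ := τ * (1 + ρ ^ 2) with hζdef
    have hζ1 : 1 < ζ := by nlinarith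
    have hζ0 : 0 < ζ := lt_trans one_pos hζ1
    have hw : deriv w ρ = -(2 * (1 / (1 + ρ ^ 2))) := (hasDerivAt_w ρ).deriv
    rw [deriv2_K_eq hζ0, hw]
    rw [Real.norm_eq_abs, abs_mul]
    have hbr : |K ζ - ζ ^ 2 * K2 ζ| ≤ 78 / ζ := bracket_bound hζ1
    have h1 : |ρ ^ 3 * (-(2 * (1 / (1 + ρ ^ 2)))) ^ 3| = 8 * ρ ^ 3 / (1 + ρ ^ 2) ^ 3 := by
      rw [abs_mul, abs_of_pos (by positivity : (0:ℝ) < ρ ^ 3)]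
      rw [abs_pow, abs_neg, abs_of_pos (by positivity : (0:ℝ) < 2 * (1 / (1 + ρ ^ 2)))]
      field_simp
      ring
    rw [h1]
    calc 8 * ρ ^ 3 / (1 + ρ ^ 2) ^ 3 * |K ζ - ζ ^ 2 * K2 ζ|
        ≤ 8 * ρ ^ 3 / (1 + ρ ^ 2) ^ 3 * (78 / ζ) := by
          apply mul_le_mul_of_nonneg_left hbr (by positivity)
      _ ≤ 624 / τ * (1 + ρ ^ 2)⁻¹ := by
          have hp : (0:ℝ) < 1 + ρ ^ 2 := by positivity
          have hρle : ρ ≤ 1 + ρ ^ 2 := by nlinarith [sq_nonneg (ρ - 1)]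
          have hcube : ρ ^ 3 ≤ (1 + ρ ^ 2) ^ 3 := pow_le_pow_left₀ hρ0.le hρle 3
          have hrhs : 624 / τ * (1 + ρ ^ 2)⁻¹ = 624 / (τ * (1 + ρ ^ 2)) := by
            field_simp
          rw [hζdef, div_mul_div_comm, hrhs,
            div_le_div_iff₀ (by positivity) (by positivity)]
          nlinarith [mul_nonneg (mul_pos hτ0 hp).le (sub_nonneg.mpr hcube)]
  refine hle.trans ?_
  rw [MeasureTheory.integral_const_mul, integral_Ioi_inv_one_add_sq]
  rw [Real.arctan_zero, sub_zero]
  have h : 624 / τ * (Real.pi / 2) = 312 * Real.pi / τ := by ring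
  rw [h]
  gcongr
  nlinarith [Real.pi_pos]
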